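/- For every formula A of L and every set Γ of formulas of L: A is a DI9 logical consequence of Γ if and only if A is a tautological consequence of Γ in the sense of classical semantics. -/
import Mathlib


/-- Formulas of the propositional language L: countably many atoms,
negation, and disjunction. -/
inductive Form : Type
  | atom : ℕ → Form
  | neg : Form → Form
  | disj : Form → Form → Form

/-- The three values: the truth values `T`, `F`, and the value `O`
(absence of truth value). -/
inductive Val3 : Type
  | T : Val3
  | F : Val3
  | O : Val3
  deriving DecidableEq

/-- A DI9 valuation for L: a function from (atomic formula, real number)
to {T, F, O} satisfying persistence of truth values and weak bivalence. -/
structure DI9Val where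
  val : ℕ → ℝ → Val3
  mono_T : ∀ (n : ℕ) (j h : ℝ), j < h → val n j = Val3.T → val n h = Val3.T
  mono_F : ∀ (n : ℕ) (j h : ℝ), j < h → val n j = Val3.F → val n h = Val3.F
  eventually_tv : ∀ n : ℕ, ∃ j : ℝ, val n j = Val3.T ∨ val n j = Val3.F

-- The DI9 classical interpretation α* associated to a DI9 valuation α.
open Classical in
noncomputable def cstar (α : DI9Val) : Form → Val3
  | .atom n => if ∃ j : ℝ, α.val n j = Val3.T then Val3.T else Val3.F
  | .neg B => if cstar α B = Val3.F then Val3.T else Val3.F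
  | .disj B C => if cstar α B = Val3.T ∨ cstar α C = Val3.T then Val3.T else Val3.F

/-- β is a j-extension of α: they agree on all atomic formulas at all times ≤ j. -/
def IsJExt (β α : DI9Val) (j : ℝ) : Prop :=
  ∀ (n : ℕ) (h : ℝ), h ≤ j → β.val n h = α.val n h

-- The DI9 interpretation Iα associated to a DI9 valuation α.
open Classical in
noncomputable def interp (α : DI9Val) : Form → ℝ → Val3
  | .atom n, j => α.val n j
  | .neg B, j =>
      match interp α B j with
      | Val3.T => Val3.F
      | Val3.F => Val3.T
      | Val3.O => Val3.O
  | .disj B C, j =>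
      if ∀ β : DI9Val, IsJExt β α j → (cstar β B = Val3.T ∨ cstar β C = Val3.T) then
        Val3.T
      else if ∀ β : DI9Val, IsJExt β α j → (cstar β B = Val3.F ∧ cstar β C = Val3.F) then
        Val3.F
      else Val3.O

/-- A classical interpretation for L. -/
structure ClassInterp where
  val : Form → Val3
  tv : ∀ A : Form, val A = Val3.T ∨ val A = Val3.F
  neg_iff : ∀ B : Form, val (.neg B) = Val3.T ↔ val B = Val3.F
  disj_iff : ∀ B C : Form, val (.disj B C) = Val3.T ↔
    (val B = Val3.T ∨ val C = Val3.T)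

/-- A is a tautological consequence of Γ in the sense of classical semantics. -/
def TautConseq (Γ : Set Form) (A : Form) : Prop :=
  ∀ Ic : ClassInterp, (∀ B ∈ Γ, Ic.val B = Val3.T) → Ic.val A = Val3.T

/-- A is a DI9 logical consequence of Γ. -/
def DI9Conseq (Γ : Set Form) (A : Form) : Prop :=
  ∀ (j : ℝ) (α : DI9Val), (∀ B ∈ Γ, interp α B j = Val3.T) → interp α A j = Val3.T


-- ===== auxiliary lemmas =====

lemma cstar_tv (α : DI9Val) (A : Form) : cstar α A = Val3.T ∨ cstar α A = Val3.F := by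
  induction A with
  | atom n => simp only [cstar]; split <;> simp
  | neg B ih => simp only [cstar]; split <;> simp
  | disj B C ihB ihC => simp only [cstar]; split <;> simp

/-- cstar packaged as a classical interpretation. -/
noncomputable def toClass (α : DI9Val) : ClassInterp where
  val := cstar α
  tv := cstar_tv α
  neg_iff := by
    intro B; simp only [cstar]; split <;> simp_all
  disj_iff := by
    intro B C; simp only [cstar]; split <;> simp_all

lemma never_T_of_F (α : DI9Val) (n : ℕ) (j : ℝ) (hF : α.val n j = Val3.F) :
    ∀ h, α.val n h ≠ Val3.T := by
  intro h hT
  rcases lt_trichotomy h j with hlt | heq | hgt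
  · have := α.mono_T n h j hlt hT; simp_all
  · subst heq; simp_all
  · have := α.mono_F n j h hgt hF; simp_all

lemma O_before (α : DI9Val) (n : ℕ) (j : ℝ) (h0 : α.val n j = Val3.O) :
    ∀ h ≤ j, α.val n h = Val3.O := by
  intro h hle
  rcases eq_or_lt_of_le hle with rfl | hlt
  · exact h0
  · rcases hv : α.val n h with _ | _ | _
    · have := α.mono_T n h j hlt hv; simp_all
    · have := α.mono_F n h j hlt hv; simp_all
    · rfl

/-- Valuation agreeing with α up to j at all atoms, but with atom n taking
value v (a truth value) strictly after j.  Used when α.val n j = O. -/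
noncomputable def override (α : DI9Val) (n : ℕ) (j : ℝ) (v : Val3)
    (hO : α.val n j = Val3.O) (hv : v = Val3.T ∨ v = Val3.F) : DI9Val where
  val m h := if m = n then (if h ≤ j then Val3.O else v) else α.val m h
  mono_T := by
    intro m h1 h2 hlt hT
    by_cases hm : m = n
    · subst hm
      simp only [if_pos rfl] at hT ⊢
      by_cases h1j : h1 ≤ j
      · rw [if_pos h1j] at hT; simp at hT
      · have : ¬ h2 ≤ j := fun h => h1j (le_of_lt (lt_of_lt_of_le hlt h))
        rw [if_neg h1j] at hT
        rw [if_neg this]; exact hT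
    · simp only [if_neg hm] at hT ⊢
      exact α.mono_T m h1 h2 hlt hT
  mono_F := by
    intro m h1 h2 hlt hF
    by_cases hm : m = n
    · subst hm
      simp only [if_pos rfl] at hF ⊢
      by_cases h1j : h1 ≤ j
      · rw [if_pos h1j] at hF; simp at hF
      · have : ¬ h2 ≤ j := fun h => h1j (le_of_lt (lt_of_lt_of_le hlt h))
        rw [if_neg h1j] at hF
        rw [if_neg this]; exact hF
    · simp only [if_neg hm] at hF ⊢
      exact α.mono_F m h1 h2 hlt hF
  eventually_tv := by
    intro m
    by_cases hm : m = n
    · subst hm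
      refine ⟨j + 1, ?_⟩
      have : ¬ (j + 1 : ℝ) ≤ j := by linarith
      simp only [if_pos rfl, if_neg this]
      exact hv
    · obtain ⟨k, hk⟩ := α.eventually_tv m
      refine ⟨k, ?_⟩
      simp only [if_neg hm]
      exact hk

lemma override_jext (α : DI9Val) (n : ℕ) (j : ℝ) (v : Val3)
    (hO : α.val n j = Val3.O) (hv : v = Val3.T ∨ v = Val3.F) :
    IsJExt (override α n j v hO hv) α j := by
  intro m h hle
  by_cases hm : m = n
  · rw [hm]
    simp only [override, if_pos rfl, if_pos hle]
    exact (O_before α n j hO h hle).symm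
  · simp only [override, if_neg hm]

lemma jext_refl (α : DI9Val) (j : ℝ) : IsJExt α α j := fun _ _ _ => rfl

/-- L1: if interp gives a truth value at j, every j-extension's cstar agrees. -/
lemma interp_to_cstar (A : Form) : ∀ (α : DI9Val) (j : ℝ),
    (interp α A j = Val3.T → ∀ β, IsJExt β α j → cstar β A = Val3.T) ∧
    (interp α A j = Val3.F → ∀ β, IsJExt β α j → cstar β A = Val3.F) := by
  induction A with
  | atom n =>
    intro α j
    constructor
    · intro h β hβ
      have hb : β.val n j = Val3.T := by rw [hβ n j le_rfl]; exact h
      have hex : ∃ k : ℝ, β.val n k = Val3.T := ⟨j, hb⟩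
      simp only [cstar, if_pos hex]
    · intro h β hβ
      have hb : β.val n j = Val3.F := by rw [hβ n j le_rfl]; exact h
      have : ¬ ∃ k, β.val n k = Val3.T := fun ⟨k, hk⟩ => never_T_of_F β n j hb k hk
      simp only [cstar, if_neg this]
  | neg B ih =>
    intro α j
    constructor
    · intro h β hβ
      have hB : interp α B j = Val3.F := by
        rcases hv : interp α B j <;> simp [interp, hv] at h <;> rfl
      have := (ih α j).2 hB β hβ
      simp only [cstar, if_pos this]
    · intro h β hβ
      have hB : interp α B j = Val3.T := by
        rcases hv : interp α B j <;> simp [interp, hv] at h <;> rfl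
      have hT := (ih α j).1 hB β hβ
      have : cstar β B ≠ Val3.F := by rw [hT]; simp
      simp only [cstar, if_neg this]
  | disj B C ihB ihC =>
    intro α j
    constructor
    · intro h β hβ
      have hP : ∀ γ : DI9Val, IsJExt γ α j → (cstar γ B = Val3.T ∨ cstar γ C = Val3.T) := by
        by_contra hc
        simp only [interp, if_neg hc] at h
        split at h <;> simp_all
      simp only [cstar, if_pos (hP β hβ)]
    · intro h β hβ
      have hQ : ∀ γ : DI9Val, IsJExt γ α j → (cstar γ B = Val3.F ∧ cstar γ C = Val3.F) := by
        by_cases hP : ∀ γ : DI9Val, IsJExt γ α j → (cstar γ B = Val3.T ∨ cstar γ C = Val3.T)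
        · simp only [interp, if_pos hP] at h; simp at h
        · by_contra hc
          simp only [interp, if_neg hP, if_neg hc] at h; simp at h
      obtain ⟨h1, h2⟩ := hQ β hβ
      have : ¬ (cstar β B = Val3.T ∨ cstar β C = Val3.T) := by
        rw [h1, h2]; simp
      simp only [cstar, if_neg this]

/-- L2: if every j-extension's cstar agrees on a truth value, interp gives it. -/
lemma cstar_to_interp (A : Form) : ∀ (α : DI9Val) (j : ℝ),
    ((∀ β, IsJExt β α j → cstar β A = Val3.T) → interp α A j = Val3.T) ∧
    ((∀ β, IsJExt β α j → cstar β A = Val3.F) → interp α A j = Val3.F) := by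
  induction A with
  | atom n =>
    intro α j
    constructor
    · intro H
      show α.val n j = Val3.T
      rcases hv : α.val n j with _ | _ | _
      · rfl
      · exfalso
        have := H α (jext_refl α j)
        simp only [cstar] at this
        split at this
        · rename_i hex
          obtain ⟨k, hk⟩ := hex
          exact never_T_of_F α n j hv k hk
        · simp at this
      · exfalso
        set β := override α n j Val3.F hv (Or.inr rfl) with hβdef
        have := H β (override_jext α n j Val3.F hv (Or.inr rfl))
        simp only [cstar] at this
        split at this
        · rename_i hex
          obtain ⟨k, hk⟩ := hex
          simp only [hβdef, override, if_pos rfl] at hk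
          by_cases hkj : k ≤ j <;> simp [hkj] at hk
        · simp at this
    · intro H
      show α.val n j = Val3.F
      rcases hv : α.val n j with _ | _ | _
      · exfalso
        have := H α (jext_refl α j)
        have hex : ∃ k : ℝ, α.val n k = Val3.T := ⟨j, hv⟩
        simp only [cstar, if_pos hex] at this
        exact Val3.noConfusion this
      · rfl
      · exfalso
        set β := override α n j Val3.T hv (Or.inl rfl) with hβdef
        have := H β (override_jext α n j Val3.T hv (Or.inl rfl))
        have hT : β.val n (j + 1) = Val3.T := by
          have hnle : ¬ (j + 1 : ℝ) ≤ j := by linarith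
          simp only [hβdef, override, if_pos rfl, if_neg hnle]
          simp
        have hex : ∃ k : ℝ, β.val n k = Val3.T := ⟨j + 1, hT⟩
        simp only [cstar, if_pos hex] at this
        exact Val3.noConfusion this
  | neg B ih =>
    intro α j
    constructor
    · intro H
      have hB : ∀ β, IsJExt β α j → cstar β B = Val3.F := by
        intro β hβ
        have := H β hβ
        simp only [cstar] at this
        split at this
        · assumption
        · simp at this
      have := (ih α j).2 hB
      simp [interp, this]
    · intro H
      have hB : ∀ β, IsJExt β α j → cstar β B = Val3.T := by
        intro β hβ
        have := H β hβ
        simp only [cstar] at this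
        split at this
        · simp at this
        · rcases cstar_tv β B with h | h
          · exact h
          · simp_all
      have := (ih α j).1 hB
      simp [interp, this]
  | disj B C ihB ihC =>
    intro α j
    constructor
    · intro H
      have hP : ∀ β : DI9Val, IsJExt β α j → (cstar β B = Val3.T ∨ cstar β C = Val3.T) := by
        intro β hβ
        have := H β hβ
        simp only [cstar] at this
        split at this
        · assumption
        · simp at this
      simp only [interp, if_pos hP]
    · intro H
      have hQ : ∀ β : DI9Val, IsJExt β α j → (cstar β B = Val3.F ∧ cstar β C = Val3.F) := by
        intro β hβ
        have := H β hβ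
        simp only [cstar] at this
        split at this
        · simp at this
        · rename_i hc
          push_neg at hc
          constructor
          · rcases cstar_tv β B with h | h
            · exact absurd h hc.1
            · exact h
          · rcases cstar_tv β C with h | h
            · exact absurd h hc.2
            · exact h
      have hP : ¬ ∀ β : DI9Val, IsJExt β α j → (cstar β B = Val3.T ∨ cstar β C = Val3.T) := by
        intro hP
        obtain ⟨h1, h2⟩ := hQ α (jext_refl α j)
        rcases hP α (jext_refl α j) with h | h <;> simp_all
      simp only [interp, if_neg hP, if_pos hQ]

/-- The constant valuation built from a classical interpretation. -/
noncomputable def constVal (Ic : ClassInterp) : DI9Val where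
  val n _ := Ic.val (.atom n)
  mono_T := by intros; assumption
  mono_F := by intros; assumption
  eventually_tv := fun n => ⟨0, Ic.tv _⟩

lemma constVal_jext_cstar (Ic : ClassInterp) (j : ℝ) (β : DI9Val)
    (hβ : IsJExt β (constVal Ic) j) (A : Form) : cstar β A = Ic.val A := by
  induction A with
  | atom n =>
    rcases Ic.tv (.atom n) with h | h
    · have hb : β.val n j = Val3.T := by
        rw [hβ n j le_rfl]; simpa [constVal] using h
      rw [h]
      have hex : ∃ k : ℝ, β.val n k = Val3.T := ⟨j, hb⟩
      simp only [cstar, if_pos hex]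
    · have hb : β.val n j = Val3.F := by
        rw [hβ n j le_rfl]; simpa [constVal] using h
      have : ¬ ∃ k, β.val n k = Val3.T := fun ⟨k, hk⟩ => never_T_of_F β n j hb k hk
      rw [h]
      simp only [cstar, if_neg this]
  | neg B ih =>
    simp only [cstar, ih]
    rcases Ic.tv B with h | h
    · have h1 : Ic.val B ≠ Val3.F := by rw [h]; simp
      rw [if_neg h1]
      rcases Ic.tv (.neg B) with h2 | h2
      · rw [(Ic.neg_iff B).mp h2] at h; simp at h
      · exact h2.symm
    · rw [if_pos h]
      exact ((Ic.neg_iff B).mpr h).symm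
  | disj B C ihB ihC =>
    simp only [cstar, ihB, ihC]
    by_cases h : Ic.val B = Val3.T ∨ Ic.val C = Val3.T
    · rw [if_pos h]
      exact ((Ic.disj_iff B C).mpr h).symm
    · rw [if_neg h]
      rcases Ic.tv (.disj B C) with h2 | h2
      · exact absurd ((Ic.disj_iff B C).mp h2) h
      · exact h2.symm

lemma constVal_interp (Ic : ClassInterp) (A : Form) (j : ℝ) :
    interp (constVal Ic) A j = Ic.val A := by
  induction A with
  | atom n => simp [interp, constVal]
  | neg B ih =>
    simp only [interp, ih]
    rcases Ic.tv B with h | h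
    · rw [h]
      rcases Ic.tv (.neg B) with h2 | h2
      · rw [(Ic.neg_iff B).mp h2] at h; simp at h
      · exact h2.symm
    · rw [h]
      exact ((Ic.neg_iff B).mpr h).symm
  | disj B C ihB ihC =>
    by_cases h : Ic.val B = Val3.T ∨ Ic.val C = Val3.T
    · have hP : ∀ β : DI9Val, IsJExt β (constVal Ic) j →
          (cstar β B = Val3.T ∨ cstar β C = Val3.T) := by
        intro β hβ
        rw [constVal_jext_cstar Ic j β hβ B, constVal_jext_cstar Ic j β hβ C]
        exact h
      rw [((Ic.disj_iff B C).mpr h)]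
      simp only [interp, if_pos hP]
    · push_neg at h
      have hB : Ic.val B = Val3.F := by rcases Ic.tv B with h1 | h1 <;> simp_all
      have hC : Ic.val C = Val3.F := by rcases Ic.tv C with h1 | h1 <;> simp_all
      have hQ : ∀ β : DI9Val, IsJExt β (constVal Ic) j →
          (cstar β B = Val3.F ∧ cstar β C = Val3.F) := by
        intro β hβ
        rw [constVal_jext_cstar Ic j β hβ B, constVal_jext_cstar Ic j β hβ C]
        exact ⟨hB, hC⟩
      have hP : ¬ ∀ β : DI9Val, IsJExt β (constVal Ic) j →
          (cstar β B = Val3.T ∨ cstar β C = Val3.T) := by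
        intro hP
        rcases hP (constVal Ic) (jext_refl _ j) with h1 | h1 <;>
          rw [constVal_jext_cstar Ic j _ (jext_refl _ j)] at h1 <;> simp_all
      have hD : Ic.val (.disj B C) = Val3.F := by
        rcases Ic.tv (.disj B C) with h2 | h2
        · exact absurd ((Ic.disj_iff B C).mp h2) (by simp [hB, hC])
        · exact h2
      rw [hD]
      simp only [interp, if_neg hP, if_pos hQ]

theorem stmt_14 (Γ : Set Form) (A : Form) : DI9Conseq Γ A ↔ TautConseq Γ A := by
  constructor
  · intro hD Ic hΓ
    have := hD 0 (constVal Ic) (fun B hB => by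
      rw [constVal_interp Ic B 0]; exact hΓ B hB)
    rwa [constVal_interp Ic A 0] at this
  · intro hT j α hΓ
    apply (cstar_to_interp A α j).1
    intro β hβ
    have hΓβ : ∀ B ∈ Γ, (toClass β).val B = Val3.T := by
      intro B hB
      exact (interp_to_cstar B α j).1 (hΓ B hB) β hβ
    exact hT (toClass β) hΓβ
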